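/- Let a be a coercive bounded operator on H₁ and m a coercive bounded operator on H₀, and let Λ : BD(G) → BD(D) be the Dirichlet-to-Neumann operator associated with −DaG + m. Then Λ is a bounded bijective operator from BD(G) onto BD(D) with bounded inverse. Moreover, Λu₀ = π_{BD(D)} of the second component of (m, −D; −G̊, a⁻¹)^{-1}(−mu₀, Gu₀) for all u₀ ∈ BD(G), and Λ^{-1}q₀ = π_{BD(G)} of the first component of (m, −D̊; −G, a⁻¹)^{-1}(Dq₀, −a⁻¹q₀) for all q₀ ∈ BD(D). -/

import Mathlib

open Filter Topology

noncomputable section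

namespace DtNPaper

local notation "⟪" x ", " y "⟫" => (inner ℂ x y : ℂ)

/-- Membership in the abstract boundary data space `BD(T)`: `u ∈ dom T`
(with `p = T u`, i.e. `(u, p)` in the graph of `T`) and `u` is orthogonal to
`dom T̊` with respect to the graph inner product of `dom T`. -/
def memBD {E F : Type*} [NormedAddCommGroup E] [InnerProductSpace ℂ E]
    [NormedAddCommGroup F] [InnerProductSpace ℂ F]
    (T Ti : E →ₗ.[ℂ] F) (u : E) : Prop :=
  ∃ p : F, (u, p) ∈ T.graph ∧ ∀ v w, (v, w) ∈ Ti.graph → ⟪v, u⟫ + ⟪w, p⟫ = 0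

/-- A bounded operator `M` is coercive if `Re (M x, x) ≥ μ ‖x‖²` for some `μ > 0`. -/
def Coercive {E : Type*} [NormedAddCommGroup E] [InnerProductSpace ℂ E]
    (M : E →L[ℂ] E) : Prop :=
  ∃ μ : ℝ, 0 < μ ∧ ∀ x : E, μ * ‖x‖ ^ 2 ≤ (⟪x, M x⟫).re

/-- Sequential formulation of compactness of the inclusion of `dom T`
(graph norm) into `E`. -/
def CompactIncl {E F : Type*} [NormedAddCommGroup E] [InnerProductSpace ℂ E]
    [NormedAddCommGroup F] [InnerProductSpace ℂ F] (T : E →ₗ.[ℂ] F) : Prop :=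
  ∀ (u : ℕ → E) (p : ℕ → F), (∀ n, (u n, p n) ∈ T.graph) →
    (∃ C : ℝ, ∀ n, ‖u n‖ ^ 2 + ‖p n‖ ^ 2 ≤ C) →
    ∃ φ : ℕ → ℕ, StrictMono φ ∧ ∃ x : E, Tendsto (fun j => u (φ j)) atTop (𝓝 x)

/-- The range of a partially defined linear operator, as a set. -/
def ranSet {E F : Type*} [NormedAddCommGroup E] [InnerProductSpace ℂ E]
    [NormedAddCommGroup F] [InnerProductSpace ℂ F] (T : E →ₗ.[ℂ] F) : Set F :=
  {p | ∃ u, (u, p) ∈ T.graph}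

/-- The Dirichlet-to-Neumann graph associated with `-D a G + m`:
the set of pairs `(π_{BD(G)} u, π_{BD(D)} (a G u))` where `u ∈ dom (D a G)` and
`m u - D a G u = 0`.  The orthogonal projections onto the boundary data spaces
are characterised by membership in `BD` together with the difference lying in
the domain of the corresponding minimal operator. -/
def dtnGraph {E F : Type*} [NormedAddCommGroup E] [InnerProductSpace ℂ E]
    [NormedAddCommGroup F] [InnerProductSpace ℂ F]
    (G Gi : E →ₗ.[ℂ] F) (D Di : F →ₗ.[ℂ] E)
    (a : F →L[ℂ] F) (m : E →L[ℂ] E) : Set (E × F) :=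
  {z | ∃ u p, (u, p) ∈ G.graph ∧ (a p, m u) ∈ D.graph ∧
    memBD G Gi z.1 ∧ u - z.1 ∈ Gi.domain ∧
    memBD D Di z.2 ∧ a p - z.2 ∈ Di.domain}

/-- The Dirichlet-to-Neumann graph in `H`: `(φ, ψ)` belongs to it if there is
`u₀ ∈ BD(G)` with `κ u₀ = φ` and `Λ u₀ = G (κ* ψ)`; here `k` is `κ` and
`kstarG` is the map `ψ ↦ G (κ* ψ)`. -/
def dtnGraphH {E F HS : Type*} [NormedAddCommGroup E] [InnerProductSpace ℂ E]
    [NormedAddCommGroup F] [InnerProductSpace ℂ F]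
    [NormedAddCommGroup HS] [InnerProductSpace ℂ HS]
    (G Gi : E →ₗ.[ℂ] F) (D Di : F →ₗ.[ℂ] E)
    (a : F →L[ℂ] F) (m : E →L[ℂ] E)
    (k : E → HS) (kstarG : HS → F) : Set (HS × HS) :=
  {z | ∃ u₀ : E, memBD G Gi u₀ ∧ k u₀ = z.1 ∧
    (u₀, kstarG z.2) ∈ dtnGraph G Gi D Di a m}

/-!
The Dirichlet problem (`u - u₀ ∈ dom G̊`) and the Neumann problem (`a G u - q₀ ∈ dom D̊`) for
`m u = D a G u` are Lax–Milgram problems for the coercive operator `diag(m, a)` on the closed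
subspaces `graph G̊` and `graph G` of the `L²` product `H₀ × H₁`: because `G̊ = -D*`, `D = -G̊*`
and `D̊ = -G*`, the conditions `a G u ∈ dom D, D a G u = m u` and `a G u - q₀ ∈ dom D̊` are
orthogonality conditions there. Both problems are therefore uniquely solvable with bounds.
Since `Λ` sends `π_{BD(G)} u` to `π_{BD(D)} (a G u)` for the solution `u`, and the projections onto
the boundary data spaces are contractions, `Λ` is well defined, bijective and bounded both ways.
The block systems are uniquely solvable for the same reason, and `(u - u₀, a G u)`, resp.
`(u, a G u - q₀)`, solve them, which gives the representation formulas.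
-/

open WithLp

section Coercive

variable {E : Type*} [NormedAddCommGroup E] [InnerProductSpace ℂ E] {T : E →L[ℂ] E}

theorem Coercive.exists_pos_mul_norm_le (hT : Coercive T) :
    ∃ μ > 0, ∀ (x : E) (K : ℝ), 0 ≤ K → (⟪x, T x⟫).re ≤ ‖x‖ * K → μ * ‖x‖ ≤ K := by
  obtain ⟨μ, hμ, hcoer⟩ := hT
  refine ⟨μ, hμ, fun x K hK hx => ?_⟩
  rcases (norm_nonneg x).eq_or_lt with hx0 | hx0
  · rwa [← hx0, mul_zero]
  · nlinarith [hcoer x]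

theorem Coercive.eq_zero_of_re_inner_nonpos (hT : Coercive T) {x : E}
    (hx : (⟪x, T x⟫).re ≤ 0) : x = 0 := by
  obtain ⟨μ, hμ, hbound⟩ := hT.exists_pos_mul_norm_le
  have := hbound x 0 le_rfl (by simpa using hx)
  exact norm_le_zero_iff.1 (by nlinarith [norm_nonneg x])

theorem Coercive.surjective [CompleteSpace E] (hT : Coercive T) : Function.Surjective T := by
  obtain ⟨μ, hμ, hbound⟩ := hT.exists_pos_mul_norm_le
  have hanti : AntilipschitzWith ⟨μ⁻¹, by positivity⟩ T := T.antilipschitz_of_bound fun x => by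
    have := hbound x ‖T x‖ (norm_nonneg _)
      ((Complex.re_le_norm _).trans (norm_inner_le_norm _ _))
    change ‖x‖ ≤ μ⁻¹ * ‖T x‖
    rwa [le_inv_mul_iff₀ hμ]
  have hclosed : IsClosed (LinearMap.range (T : E →ₗ[ℂ] E) : Set E) := by
    rw [LinearMap.coe_range]
    exact hanti.isClosed_range T.uniformContinuous
  have : CompleteSpace (LinearMap.range (T : E →ₗ[ℂ] E)) := hclosed.completeSpace_coe
  have hrange : LinearMap.range (T : E →ₗ[ℂ] E) = ⊤ := by
    rw [← Submodule.orthogonal_eq_bot_iff, Submodule.eq_bot_iff]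
    intro y hy
    apply hT.eq_zero_of_re_inner_nonpos
    rw [(Submodule.mem_orthogonal' _ _).1 hy (T y) ⟨y, rfl⟩, Complex.zero_re]
  exact LinearMap.range_eq_top.1 hrange

/-- Lax–Milgram on a closed subspace `V`: the compression of `T` to `V` is coercive, hence onto. -/
theorem Coercive.exists_mem_sub_mem_orthogonal [CompleteSpace E] (hT : Coercive T)
    {V : Submodule ℂ E} (hV : IsClosed (V : Set E)) (y : E) : ∃ z ∈ V, T z - y ∈ Vᗮ := by
  have : CompleteSpace V := hV.completeSpace_coe
  have hS : Coercive (V.orthogonalProjectionOnto ∘L T ∘L V.subtypeL) := by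
    obtain ⟨μ, hμ, hcoer⟩ := hT
    exact ⟨μ, hμ, fun x => by simpa using hcoer x⟩
  obtain ⟨z, hz⟩ := hS.surjective (V.orthogonalProjectionOnto y)
  refine ⟨z, z.2, ?_⟩
  rw [← Submodule.orthogonalProjectionOnto_eq_zero_iff, map_sub]
  exact sub_eq_zero.2 hz

end Coercive

section L2Product

variable {E F : Type*} [NormedAddCommGroup E] [InnerProductSpace ℂ E]
  [NormedAddCommGroup F] [InnerProductSpace ℂ F]

def l2ProdMap (m : E →L[ℂ] E) (a : F →L[ℂ] F) : WithLp 2 (E × F) →L[ℂ] WithLp 2 (E × F) :=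
  (prodContinuousLinearEquiv 2 ℂ E F).symm.toContinuousLinearMap ∘L m.prodMap a ∘L
    (prodContinuousLinearEquiv 2 ℂ E F).toContinuousLinearMap

@[simp]
theorem l2ProdMap_apply (m : E →L[ℂ] E) (a : F →L[ℂ] F) (z : WithLp 2 (E × F)) :
    l2ProdMap m a z = toLp 2 (m z.fst, a z.snd) := rfl

theorem Coercive.prodMap {m : E →L[ℂ] E} {a : F →L[ℂ] F} (hm : Coercive m) (ha : Coercive a) :
    Coercive (l2ProdMap m a) := by
  obtain ⟨μ, hμ, hm⟩ := hm
  obtain ⟨ν, hν, ha⟩ := ha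
  refine ⟨min μ ν, lt_min hμ hν, fun z => ?_⟩
  simp only [prod_norm_sq_eq_of_L2, l2ProdMap_apply, prod_inner_apply, ofLp_fst, ofLp_snd,
    Complex.add_re]
  nlinarith [hm z.fst, ha z.snd, min_le_left μ ν, min_le_right μ ν, sq_nonneg ‖z.fst‖,
    sq_nonneg ‖z.snd‖]

theorem inner_add_inner_eq_zero_comm {u v : E} {w x : F} :
    ⟪u, v⟫ + ⟪w, x⟫ = 0 ↔ ⟪v, u⟫ + ⟪x, w⟫ = 0 := by
  rw [← inner_conj_symm u, ← inner_conj_symm w, ← map_add, map_eq_zero]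

end L2Product

theorem norm_sq_add_norm_sq_le_of_norm_toLp_le {E F E' F' : Type*} [NormedAddCommGroup E]
    [NormedAddCommGroup F] [NormedAddCommGroup E'] [NormedAddCommGroup F']
    {x : E} {y : F} {x' : E'} {y' : F'} {C : ℝ}
    (h : ‖toLp 2 (x, y)‖ ≤ C * ‖toLp 2 (x', y')‖) :
    ‖x‖ ^ 2 + ‖y‖ ^ 2 ≤ C ^ 2 * (‖x'‖ ^ 2 + ‖y'‖ ^ 2) :=
  calc ‖x‖ ^ 2 + ‖y‖ ^ 2 = ‖toLp 2 (x, y)‖ ^ 2 := (prod_norm_sq_eq_of_L2 (toLp 2 (x, y))).symm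
    _ ≤ (C * ‖toLp 2 (x', y')‖) ^ 2 := pow_le_pow_left₀ (norm_nonneg _) h 2
    _ = C ^ 2 * (‖x'‖ ^ 2 + ‖y'‖ ^ 2) := by rw [mul_pow, prod_norm_sq_eq_of_L2]; rfl

section Graphs

variable {E F : Type*} [NormedAddCommGroup E] [InnerProductSpace ℂ E]
  [NormedAddCommGroup F] [InnerProductSpace ℂ F]

def l2Graph (T : E →ₗ.[ℂ] F) : Submodule ℂ (WithLp 2 (E × F)) :=
  T.graph.comap (WithLp.linearEquiv 2 ℂ (E × F)).toLinearMap

theorem forall_mem_l2Graph {T : E →ₗ.[ℂ] F} {P : WithLp 2 (E × F) → Prop} :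
    (∀ z ∈ l2Graph T, P z) ↔ ∀ u w, (u, w) ∈ T.graph → P (toLp 2 (u, w)) :=
  ⟨fun h _ _ huw => h _ huw, fun h z hz => h z.fst z.snd hz⟩

theorem isClosed_l2Graph {T : E →ₗ.[ℂ] F} (hT : IsClosed (T.graph : Set (E × F))) :
    IsClosed (l2Graph T : Set (WithLp 2 (E × F))) :=
  hT.preimage (prod_continuous_ofLp 2 E F)

theorem mem_graph_of_mem_domain {S T : E →ₗ.[ℂ] F} (hle : S.graph ≤ T.graph) {v : E} {w : F}
    (hv : v ∈ S.domain) (hw : (v, w) ∈ T.graph) : (v, w) ∈ S.graph := by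
  obtain ⟨w', hw'⟩ := LinearPMap.mem_domain_iff.1 hv
  rwa [T.mem_graph_snd_inj (hle hw') hw rfl] at hw'

end Graphs

section BoundaryData

variable {E F : Type*} [NormedAddCommGroup E] [InnerProductSpace ℂ E]
  [NormedAddCommGroup F] [InnerProductSpace ℂ F] {T Ti : E →ₗ.[ℂ] F}

theorem memBD_iff {x : E} :
    memBD T Ti x ↔ ∃ y, (x, y) ∈ T.graph ∧ toLp 2 (x, y) ∈ (l2Graph Ti)ᗮ := by
  simp only [memBD, Submodule.mem_orthogonal, forall_mem_l2Graph, prod_inner_apply]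

theorem exists_memBD_sub_mem_domain [CompleteSpace E] [CompleteSpace F]
    (hle : Ti.graph ≤ T.graph) (hTi : IsClosed (Ti.graph : Set (E × F))) {x : E} {y : F}
    (h : (x, y) ∈ T.graph) : ∃ x₀, memBD T Ti x₀ ∧ x - x₀ ∈ Ti.domain := by
  have : CompleteSpace (l2Graph Ti) := (isClosed_l2Graph hTi).completeSpace_coe
  set g := (l2Graph Ti).starProjection (toLp 2 (x, y))
  have hg : (g.fst, g.snd) ∈ Ti.graph := (l2Graph Ti).starProjection_apply_mem _
  refine ⟨x - g.fst, memBD_iff.2 ⟨y - g.snd, T.graph.sub_mem h (hle hg), ?_⟩, ?_⟩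
  · exact (l2Graph Ti).sub_starProjection_mem_orthogonal (toLp 2 (x, y))
  · simpa using LinearPMap.mem_domain_of_mem_graph hg

theorem memBD.eq_of_sub_mem_domain (hle : Ti.graph ≤ T.graph) {x x' : E}
    (hx : memBD T Ti x) (hx' : memBD T Ti x') (hd : x - x' ∈ Ti.domain) : x = x' := by
  obtain ⟨y, hy, horth⟩ := memBD_iff.1 hx
  obtain ⟨y', hy', horth'⟩ := memBD_iff.1 hx'
  set d := toLp 2 (x, y) - toLp 2 (x', y')
  have hdTi : d ∈ l2Graph Ti := mem_graph_of_mem_domain hle hd (T.graph.sub_mem hy hy')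
  have hd0 : d = 0 :=
    inner_self_eq_zero.1 <| (Submodule.mem_orthogonal' _ _).1 (sub_mem horth horth') d hdTi
  exact sub_eq_zero.1 (congrArg WithLp.fst hd0)

theorem memBD.norm_le (hle : Ti.graph ≤ T.graph) {x₀ x : E} {y₀ y : F} (hx₀ : memBD T Ti x₀)
    (hy₀ : (x₀, y₀) ∈ T.graph) (h : (x, y) ∈ T.graph) (hd : x - x₀ ∈ Ti.domain) :
    ‖toLp 2 (x₀, y₀)‖ ≤ ‖toLp 2 (x, y)‖ := by
  obtain ⟨p, hp, horth⟩ := memBD_iff.1 hx₀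
  obtain rfl : p = y₀ := T.mem_graph_snd_inj hp hy₀ rfl
  set d := toLp 2 (x, y) - toLp 2 (x₀, p)
  have hdTi : d ∈ l2Graph Ti := mem_graph_of_mem_domain hle hd (T.graph.sub_mem h hp)
  have hpyth := norm_add_sq_eq_norm_sq_add_norm_sq_of_inner_eq_zero _ _
    ((Submodule.mem_orthogonal' _ _).1 horth d hdTi)
  rw [add_sub_cancel] at hpyth
  nlinarith [norm_nonneg (toLp 2 (x₀, p)), norm_nonneg (toLp 2 (x, y)), sq_nonneg ‖d‖]

end BoundaryData

section NegAdjoint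

variable {E F : Type*} [NormedAddCommGroup E] [InnerProductSpace ℂ E]
  [NormedAddCommGroup F] [InnerProductSpace ℂ F]

/-- `IsNegAdjoint A B` expresses `A = -B*` through the graphs. -/
def IsNegAdjoint (A : E →ₗ.[ℂ] F) (B : F →ₗ.[ℂ] E) : Prop :=
  ∀ u w, (u, w) ∈ A.graph ↔ ∀ q s, (q, s) ∈ B.graph → ⟪w, q⟫ = -⟪u, s⟫

variable {A : E →ₗ.[ℂ] F} {B : F →ₗ.[ℂ] E}

theorem IsNegAdjoint.isClosed_graph (h : IsNegAdjoint A B) :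
    IsClosed (A.graph : Set (E × F)) := by
  have : (A.graph : Set (E × F)) =
      ⋂ y ∈ (B.graph : Set (F × E)), {x | ⟪x.2, y.1⟫ = -⟪x.1, y.2⟫} := by
    ext ⟨u, w⟩
    simp only [Set.mem_iInter₂, Set.mem_ofPred_eq, SetLike.mem_coe, Prod.forall]
    exact h u w
  rw [this]
  exact isClosed_biInter fun y _ => isClosed_eq (by fun_prop) (by fun_prop)

theorem IsNegAdjoint.mem_orthogonal_l2Graph_iff (h : IsNegAdjoint A B)
    {y : WithLp 2 (F × E)} : y ∈ (l2Graph B)ᗮ ↔ (y.snd, y.fst) ∈ A.graph := by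
  rw [Submodule.mem_orthogonal, forall_mem_l2Graph, h]
  refine forall₂_congr fun q s => imp_congr_right fun _ => ?_
  rw [eq_neg_iff_add_eq_zero, ← inner_add_inner_eq_zero_comm]
  rfl

theorem IsNegAdjoint.symm [CompleteSpace E] [CompleteSpace F] (h : IsNegAdjoint A B)
    (hB : IsClosed (B.graph : Set (F × E))) : IsNegAdjoint B A := by
  have : CompleteSpace (l2Graph B) := (isClosed_l2Graph hB).completeSpace_coe
  intro q s
  change toLp 2 (q, s) ∈ l2Graph B ↔ _
  rw [← Submodule.orthogonal_orthogonal (l2Graph B), Submodule.mem_orthogonal]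
  constructor
  · intro hqs u w huw
    have := hqs (toLp 2 (w, u)) (h.mem_orthogonal_l2Graph_iff.2 huw)
    rw [prod_inner_apply, ofLp_toLp, ofLp_toLp, inner_add_inner_eq_zero_comm] at this
    exact eq_neg_of_add_eq_zero_left (by rwa [add_comm] at this)
  · intro hqs z hz
    have := hqs _ _ (h.mem_orthogonal_l2Graph_iff.1 hz)
    rw [prod_inner_apply, ofLp_toLp, inner_add_inner_eq_zero_comm, add_comm]
    exact eq_neg_iff_add_eq_zero.1 this

end NegAdjoint

section DirichletToNeumann

variable {H₀ H₁ : Type*} [NormedAddCommGroup H₀] [InnerProductSpace ℂ H₀]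
  [NormedAddCommGroup H₁] [InnerProductSpace ℂ H₁]
  {G Gi : H₀ →ₗ.[ℂ] H₁} {D Di : H₁ →ₗ.[ℂ] H₀} {a : H₁ →L[ℂ] H₁} {m : H₀ →L[ℂ] H₀}

def solutionSpace (G : H₀ →ₗ.[ℂ] H₁) (D : H₁ →ₗ.[ℂ] H₀) (a : H₁ →L[ℂ] H₁) (m : H₀ →L[ℂ] H₀) :
    Submodule ℂ (WithLp 2 (H₀ × H₁)) where
  carrier := {z | (z.fst, z.snd) ∈ G.graph ∧ (a z.snd, m z.fst) ∈ D.graph}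
  add_mem' hz hw := ⟨G.graph.add_mem hz.1 hw.1, by simpa using D.graph.add_mem hz.2 hw.2⟩
  zero_mem' := ⟨G.graph.zero_mem, by simp⟩
  smul_mem' c _ hz := ⟨G.graph.smul_mem c hz.1, by simpa using D.graph.smul_mem c hz.2⟩

theorem mem_dtnGraph_iff {u₀ : H₀} {q₀ : H₁} :
    (u₀, q₀) ∈ dtnGraph G Gi D Di a m ↔ memBD G Gi u₀ ∧ memBD D Di q₀ ∧
      ∃ z ∈ solutionSpace G D a m, z.fst - u₀ ∈ Gi.domain ∧ a z.snd - q₀ ∈ Di.domain :=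
  ⟨fun ⟨u, p, hG, hD, hu₀, hu, hq₀, hq⟩ => ⟨hu₀, hq₀, toLp 2 (u, p), ⟨hG, hD⟩, hu, hq⟩,
    fun ⟨hu₀, hq₀, z, hz, hu, hq⟩ => ⟨z.fst, z.snd, hz.1, hz.2, hu₀, hu, hq₀, hq⟩⟩

theorem l2ProdMap_mem_orthogonal_of_mem_solutionSpace (hD : IsNegAdjoint D Gi)
    {z : WithLp 2 (H₀ × H₁)} (hz : z ∈ solutionSpace G D a m) :
    l2ProdMap m a z ∈ (l2Graph Gi)ᗮ :=
  hD.mem_orthogonal_l2Graph_iff.2 hz.2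

theorem eq_zero_of_mem_solutionSpace_of_fst_mem_domain (hD : IsNegAdjoint D Gi)
    (hGiG : Gi.graph ≤ G.graph) (hm : Coercive m) (ha : Coercive a) {z : WithLp 2 (H₀ × H₁)}
    (hz : z ∈ solutionSpace G D a m) (hzi : z.fst ∈ Gi.domain) : z = 0 := by
  apply (hm.prodMap ha).eq_zero_of_re_inner_nonpos
  rw [(Submodule.mem_orthogonal _ _).1 (l2ProdMap_mem_orthogonal_of_mem_solutionSpace hD hz) z
    (mem_graph_of_mem_domain hGiG hzi hz.1), Complex.zero_re]

theorem eq_zero_of_mem_solutionSpace_of_flux_mem_domain (hDi : IsNegAdjoint Di G)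
    (hDiD : Di.graph ≤ D.graph) (hm : Coercive m) (ha : Coercive a) {z : WithLp 2 (H₀ × H₁)}
    (hz : z ∈ solutionSpace G D a m) (hzi : a z.snd ∈ Di.domain) : z = 0 := by
  apply (hm.prodMap ha).eq_zero_of_re_inner_nonpos
  have horth : l2ProdMap m a z ∈ (l2Graph G)ᗮ :=
    hDi.mem_orthogonal_l2Graph_iff.2 (mem_graph_of_mem_domain hDiD hzi hz.2)
  rw [(Submodule.mem_orthogonal _ _).1 horth z hz.1, Complex.zero_re]

theorem exists_mem_solutionSpace_fst_sub_mem_domain [CompleteSpace H₀] [CompleteSpace H₁]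
    (hGi : IsNegAdjoint Gi D) (hD : IsNegAdjoint D Gi) (hGiG : Gi.graph ≤ G.graph)
    (hm : Coercive m) (ha : Coercive a) {u₀ : H₀} {p₀ : H₁} (h₀ : (u₀, p₀) ∈ G.graph) :
    ∃ z ∈ solutionSpace G D a m, z.fst - u₀ ∈ Gi.domain := by
  set x₀ := toLp 2 (u₀, p₀)
  obtain ⟨w, hw, horth⟩ := (hm.prodMap ha).exists_mem_sub_mem_orthogonal
    (isClosed_l2Graph hGi.isClosed_graph) (-l2ProdMap m a x₀)
  refine ⟨x₀ + w, ⟨G.graph.add_mem h₀ (hGiG hw),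
    (hD.mem_orthogonal_l2Graph_iff (y := l2ProdMap m a (x₀ + w))).1 ?_⟩, ?_⟩
  · rwa [sub_neg_eq_add, add_comm, ← map_add] at horth
  · simpa [x₀] using LinearPMap.mem_domain_of_mem_graph hw

theorem exists_mem_solutionSpace_flux_sub_mem_domain [CompleteSpace H₀] [CompleteSpace H₁]
    (hDi : IsNegAdjoint Di G) (hG : IsClosed (G.graph : Set (H₀ × H₁)))
    (hDiD : Di.graph ≤ D.graph) (hm : Coercive m) (ha : Coercive a) {q₀ : H₁} {s₀ : H₀}
    (h₀ : (q₀, s₀) ∈ D.graph) : ∃ z ∈ solutionSpace G D a m, a z.snd - q₀ ∈ Di.domain := by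
  obtain ⟨z, hz, horth⟩ := (hm.prodMap ha).exists_mem_sub_mem_orthogonal (isClosed_l2Graph hG)
    (toLp 2 (s₀, q₀))
  have hflux : (a z.snd - q₀, m z.fst - s₀) ∈ Di.graph := hDi.mem_orthogonal_l2Graph_iff.1 horth
  refine ⟨z, ⟨hz, ?_⟩, LinearPMap.mem_domain_of_mem_graph hflux⟩
  have := D.graph.add_mem (hDiD hflux) h₀
  rwa [Prod.mk_add_mk, sub_add_cancel, sub_add_cancel] at this

theorem exists_norm_le_of_mem_solutionSpace_of_fst_sub_mem_domain (hD : IsNegAdjoint D Gi)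
    (hGiG : Gi.graph ≤ G.graph) (hm : Coercive m) (ha : Coercive a) :
    ∃ C, ∀ z ∈ solutionSpace G D a m, ∀ u₀ p₀, (u₀, p₀) ∈ G.graph → z.fst - u₀ ∈ Gi.domain →
      ‖z‖ ≤ C * ‖toLp 2 (u₀, p₀)‖ := by
  set T := l2ProdMap m a
  obtain ⟨μ, hμ, hbound⟩ := (hm.prodMap ha).exists_pos_mul_norm_le
  refine ⟨‖T‖ / μ, fun z hz u₀ p₀ h₀ hd => ?_⟩
  set x₀ := toLp 2 (u₀, p₀)
  have hv : z - x₀ ∈ l2Graph Gi := mem_graph_of_mem_domain hGiG hd (G.graph.sub_mem hz.1 h₀)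
  have horth : ⟪z - x₀, T z⟫ = 0 :=
    (Submodule.mem_orthogonal _ _).1 (l2ProdMap_mem_orthogonal_of_mem_solutionSpace hD hz) _ hv
  rw [inner_sub_left, sub_eq_zero] at horth
  have hre : (⟪z, T z⟫).re ≤ ‖z‖ * (‖T‖ * ‖x₀‖) :=
    calc (⟪z, T z⟫).re = (⟪x₀, T z⟫).re := by rw [horth]
      _ ≤ ‖x₀‖ * ‖T z‖ := (Complex.re_le_norm _).trans (norm_inner_le_norm _ _)
      _ ≤ ‖x₀‖ * (‖T‖ * ‖z‖) := by gcongr; exact T.le_opNorm z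
      _ = ‖z‖ * (‖T‖ * ‖x₀‖) := by ring
  rw [div_mul_eq_mul_div, le_div_iff₀ hμ]
  linarith [hbound z _ (by positivity) hre]

theorem exists_norm_le_of_mem_solutionSpace_of_flux_sub_mem_domain (hDi : IsNegAdjoint Di G)
    (hDiD : Di.graph ≤ D.graph) (hm : Coercive m) (ha : Coercive a) :
    ∃ C, ∀ z ∈ solutionSpace G D a m, ∀ q₀ s₀, (q₀, s₀) ∈ D.graph → a z.snd - q₀ ∈ Di.domain →
      ‖z‖ ≤ C * ‖toLp 2 (q₀, s₀)‖ := by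
  set T := l2ProdMap m a
  obtain ⟨μ, hμ, hbound⟩ := (hm.prodMap ha).exists_pos_mul_norm_le
  refine ⟨μ⁻¹, fun z hz q₀ s₀ h₀ hd => ?_⟩
  set y₀ := toLp 2 (s₀, q₀)
  have hflux : (a z.snd - q₀, m z.fst - s₀) ∈ Di.graph :=
    mem_graph_of_mem_domain hDiD hd (D.graph.sub_mem hz.2 h₀)
  have horth : ⟪z, T z - y₀⟫ = 0 := (Submodule.mem_orthogonal _ _).1
    ((hDi.mem_orthogonal_l2Graph_iff (y := T z - y₀)).2 hflux) z hz.1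
  rw [inner_sub_right, sub_eq_zero] at horth
  have hy₀ : ‖y₀‖ = ‖toLp 2 (q₀, s₀)‖ :=
    ((LinearIsometryEquiv.withLpProdComm 2 ℂ H₀ H₁).norm_map y₀).symm
  have hre : (⟪z, T z⟫).re ≤ ‖z‖ * ‖y₀‖ := by
    rw [horth]
    exact (Complex.re_le_norm _).trans (norm_inner_le_norm _ _)
  rw [← hy₀, inv_mul_eq_div, le_div_iff₀ hμ]
  linarith [hbound z _ (norm_nonneg _) hre]

theorem exists_snd_mem_dtnGraph [CompleteSpace H₀] [CompleteSpace H₁] (hGi : IsNegAdjoint Gi D)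
    (hD : IsNegAdjoint D Gi) (hDi : IsNegAdjoint Di G) (hGiG : Gi.graph ≤ G.graph)
    (hDiD : Di.graph ≤ D.graph) (hm : Coercive m) (ha : Coercive a) {u₀ : H₀}
    (hu₀ : memBD G Gi u₀) : ∃ q₀, (u₀, q₀) ∈ dtnGraph G Gi D Di a m := by
  have ⟨_, hp₀, _⟩ := hu₀
  obtain ⟨z, hz, hzu⟩ := exists_mem_solutionSpace_fst_sub_mem_domain hGi hD hGiG hm ha hp₀
  obtain ⟨q₀, hq₀, hzq⟩ := exists_memBD_sub_mem_domain hDiD hDi.isClosed_graph hz.2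
  exact ⟨q₀, mem_dtnGraph_iff.2 ⟨hu₀, hq₀, z, hz, hzu, hzq⟩⟩

theorem exists_fst_mem_dtnGraph [CompleteSpace H₀] [CompleteSpace H₁] (hGi : IsNegAdjoint Gi D)
    (hDi : IsNegAdjoint Di G) (hG : IsClosed (G.graph : Set (H₀ × H₁)))
    (hGiG : Gi.graph ≤ G.graph) (hDiD : Di.graph ≤ D.graph) (hm : Coercive m) (ha : Coercive a)
    {q₀ : H₁} (hq₀ : memBD D Di q₀) : ∃ u₀, (u₀, q₀) ∈ dtnGraph G Gi D Di a m := by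
  have ⟨_, hs₀, _⟩ := hq₀
  obtain ⟨z, hz, hzq⟩ := exists_mem_solutionSpace_flux_sub_mem_domain hDi hG hDiD hm ha hs₀
  obtain ⟨u₀, hu₀, hzu⟩ := exists_memBD_sub_mem_domain hGiG hGi.isClosed_graph hz.1
  exact ⟨u₀, mem_dtnGraph_iff.2 ⟨hu₀, hq₀, z, hz, hzu, hzq⟩⟩

theorem dtnGraph_snd_unique (hD : IsNegAdjoint D Gi) (hGiG : Gi.graph ≤ G.graph)
    (hDiD : Di.graph ≤ D.graph) (hm : Coercive m) (ha : Coercive a) {u₀ : H₀} {q₀ q₀' : H₁}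
    (h : (u₀, q₀) ∈ dtnGraph G Gi D Di a m) (h' : (u₀, q₀') ∈ dtnGraph G Gi D Di a m) :
    q₀ = q₀' := by
  obtain ⟨-, hq₀, z, hz, hzu, hzq⟩ := mem_dtnGraph_iff.1 h
  obtain ⟨-, hq₀', z', hz', hzu', hzq'⟩ := mem_dtnGraph_iff.1 h'
  obtain rfl : z = z' := sub_eq_zero.1 <| eq_zero_of_mem_solutionSpace_of_fst_mem_domain hD
    hGiG hm ha (sub_mem hz hz') (by simpa using Gi.domain.sub_mem hzu hzu')
  exact hq₀.eq_of_sub_mem_domain hDiD hq₀' (by simpa using Di.domain.sub_mem hzq' hzq)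

theorem dtnGraph_fst_unique (hDi : IsNegAdjoint Di G) (hGiG : Gi.graph ≤ G.graph)
    (hDiD : Di.graph ≤ D.graph) (hm : Coercive m) (ha : Coercive a) {u₀ u₀' : H₀} {q₀ : H₁}
    (h : (u₀, q₀) ∈ dtnGraph G Gi D Di a m) (h' : (u₀', q₀) ∈ dtnGraph G Gi D Di a m) :
    u₀ = u₀' := by
  obtain ⟨hu₀, -, z, hz, hzu, hzq⟩ := mem_dtnGraph_iff.1 h
  obtain ⟨hu₀', -, z', hz', hzu', hzq'⟩ := mem_dtnGraph_iff.1 h'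
  obtain rfl : z = z' := sub_eq_zero.1 <| eq_zero_of_mem_solutionSpace_of_flux_mem_domain hDi
    hDiD hm ha (sub_mem hz hz') (by simpa using Di.domain.sub_mem hzq hzq')
  exact hu₀.eq_of_sub_mem_domain hGiG hu₀' (by simpa using Gi.domain.sub_mem hzu' hzu)

theorem exists_dtnGraph_bound (hD : IsNegAdjoint D Gi) (hGiG : Gi.graph ≤ G.graph)
    (hDiD : Di.graph ≤ D.graph) (hm : Coercive m) (ha : Coercive a) :
    ∃ C : ℝ, ∀ u₀ q₀ p s, (u₀, q₀) ∈ dtnGraph G Gi D Di a m →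
      (u₀, p) ∈ G.graph → (q₀, s) ∈ D.graph →
      ‖q₀‖ ^ 2 + ‖s‖ ^ 2 ≤ C * (‖u₀‖ ^ 2 + ‖p‖ ^ 2) := by
  obtain ⟨C, hC⟩ := exists_norm_le_of_mem_solutionSpace_of_fst_sub_mem_domain hD hGiG hm ha
  refine ⟨(‖l2ProdMap m a‖ * C) ^ 2, fun u₀ q₀ p s h hp hs => ?_⟩
  obtain ⟨-, hq₀, z, hz, hzu, hzq⟩ := mem_dtnGraph_iff.1 h
  apply norm_sq_add_norm_sq_le_of_norm_toLp_le
  calc ‖toLp 2 (q₀, s)‖ ≤ ‖toLp 2 (a z.snd, m z.fst)‖ := hq₀.norm_le hDiD hs hz.2 hzq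
    _ = ‖l2ProdMap m a z‖ :=
      (LinearIsometryEquiv.withLpProdComm 2 ℂ H₀ H₁).norm_map (l2ProdMap m a z)
    _ ≤ ‖l2ProdMap m a‖ * ‖z‖ := (l2ProdMap m a).le_opNorm z
    _ ≤ ‖l2ProdMap m a‖ * (C * ‖toLp 2 (u₀, p)‖) := by gcongr; exact hC z hz u₀ p hp hzu
    _ = ‖l2ProdMap m a‖ * C * ‖toLp 2 (u₀, p)‖ := by ring

theorem exists_dtnGraph_inverse_bound (hDi : IsNegAdjoint Di G) (hGiG : Gi.graph ≤ G.graph)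
    (hDiD : Di.graph ≤ D.graph) (hm : Coercive m) (ha : Coercive a) :
    ∃ C : ℝ, ∀ u₀ q₀ p s, (u₀, q₀) ∈ dtnGraph G Gi D Di a m →
      (u₀, p) ∈ G.graph → (q₀, s) ∈ D.graph →
      ‖u₀‖ ^ 2 + ‖p‖ ^ 2 ≤ C * (‖q₀‖ ^ 2 + ‖s‖ ^ 2) := by
  obtain ⟨C, hC⟩ := exists_norm_le_of_mem_solutionSpace_of_flux_sub_mem_domain hDi hDiD hm ha
  refine ⟨C ^ 2, fun u₀ q₀ p s h hp hs => ?_⟩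
  obtain ⟨hu₀, -, z, hz, hzu, hzq⟩ := mem_dtnGraph_iff.1 h
  apply norm_sq_add_norm_sq_le_of_norm_toLp_le
  calc ‖toLp 2 (u₀, p)‖ ≤ ‖z‖ := hu₀.norm_le hGiG hp hz.1 hzu
    _ ≤ C * ‖toLp 2 (q₀, s)‖ := hC z hz q₀ s hs hzq

theorem dirichletBlock_snd_eq_zero (hD : IsNegAdjoint D Gi) (hGiG : Gi.graph ≤ G.graph)
    (hm : Coercive m) (ha : Coercive a) {ainv : H₁ →L[ℂ] H₁} (hainv : ∀ y, a (ainv y) = y)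
    {x : H₀} {v y : H₁} {w : H₀} (hx : (x, v) ∈ Gi.graph) (hy : (y, w) ∈ D.graph)
    (h₁ : m x = w) (h₂ : ainv y = v) : y = 0 := by
  -- the block equations say that `(x, v)` solves the homogeneous Dirichlet problem
  rw [← hainv y, h₂, ← h₁] at hy
  have hz : toLp 2 (x, v) ∈ solutionSpace G D a m := ⟨hGiG hx, hy⟩
  have hv : v = 0 := congrArg WithLp.snd <| eq_zero_of_mem_solutionSpace_of_fst_mem_domain hD
    hGiG hm ha hz (LinearPMap.mem_domain_of_mem_graph hx)
  rw [← hainv y, h₂, hv, map_zero]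

theorem neumannBlock_fst_eq_zero (hDi : IsNegAdjoint Di G) (hDiD : Di.graph ≤ D.graph)
    (hm : Coercive m) (ha : Coercive a) {ainv : H₁ →L[ℂ] H₁} (hainv : ∀ y, a (ainv y) = y)
    {x : H₀} {v y : H₁} {w : H₀} (hx : (x, v) ∈ G.graph) (hy : (y, w) ∈ Di.graph)
    (h₁ : m x = w) (h₂ : ainv y = v) : x = 0 := by
  rw [← hainv y, h₂, ← h₁] at hy
  exact congrArg WithLp.fst <| eq_zero_of_mem_solutionSpace_of_flux_mem_domain hDi hDiD hm ha
    (z := toLp 2 (x, v)) ⟨hx, hDiD hy⟩ (LinearPMap.mem_domain_of_mem_graph hy)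

theorem dtnGraph_snd_eq_projection_of_dirichletBlock (hD : IsNegAdjoint D Gi)
    (hGiG : Gi.graph ≤ G.graph) (hm : Coercive m) (ha : Coercive a) {ainv : H₁ →L[ℂ] H₁}
    (hainv : ∀ x, ainv (a x) = x ∧ a (ainv x) = x) {u₀ : H₀} {q₀ p : H₁}
    (h : (u₀, q₀) ∈ dtnGraph G Gi D Di a m) (hp : (u₀, p) ∈ G.graph) {x : H₀} {v y : H₁}
    {w : H₀} (hx : (x, v) ∈ Gi.graph) (hy : (y, w) ∈ D.graph) (h₁ : m x - w = -(m u₀))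
    (h₂ : ainv y - v = p) : y - q₀ ∈ Di.domain := by
  obtain ⟨-, -, z, hz, hzu, hzq⟩ := mem_dtnGraph_iff.1 h
  have hzGi : (z.fst - u₀, z.snd - p) ∈ Gi.graph :=
    mem_graph_of_mem_domain hGiG hzu (G.graph.sub_mem hz.1 hp)
  -- `(z.fst - u₀, a z.snd)` solves the same block system
  have hy' : y - a z.snd = 0 := by
    refine dirichletBlock_snd_eq_zero hD hGiG hm ha (fun y => (hainv y).2)
      (Gi.graph.sub_mem hx hzGi) (D.graph.sub_mem hy hz.2) ?_ ?_
    · dsimp only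
      rw [map_sub, map_sub, sub_eq_iff_eq_add.1 h₁]; abel
    · dsimp only
      rw [map_sub, (hainv _).1, sub_eq_iff_eq_add.1 h₂]; abel
  rwa [sub_eq_zero.1 hy']

theorem dtnGraph_fst_eq_projection_of_neumannBlock (hDi : IsNegAdjoint Di G)
    (hDiD : Di.graph ≤ D.graph) (hm : Coercive m) (ha : Coercive a) {ainv : H₁ →L[ℂ] H₁}
    (hainv : ∀ x, ainv (a x) = x ∧ a (ainv x) = x) {u₀ : H₀} {q₀ : H₁} {s : H₀}
    (h : (u₀, q₀) ∈ dtnGraph G Gi D Di a m) (hs : (q₀, s) ∈ D.graph) {x : H₀} {v y : H₁}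
    {w : H₀} (hx : (x, v) ∈ G.graph) (hy : (y, w) ∈ Di.graph) (h₁ : m x - w = s)
    (h₂ : ainv y - v = -(ainv q₀)) : x - u₀ ∈ Gi.domain := by
  obtain ⟨-, -, z, hz, hzu, hzq⟩ := mem_dtnGraph_iff.1 h
  have hzDi : (a z.snd - q₀, m z.fst - s) ∈ Di.graph :=
    mem_graph_of_mem_domain hDiD hzq (D.graph.sub_mem hz.2 hs)
  -- `(z.fst, a z.snd - q₀)` solves the same block system
  have hx' : x - z.fst = 0 := by
    refine neumannBlock_fst_eq_zero hDi hDiD hm ha (fun y => (hainv y).2)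
      (G.graph.sub_mem hx hz.1) (Di.graph.sub_mem hy hzDi) ?_ ?_
    · dsimp only
      rw [map_sub, sub_eq_iff_eq_add.1 h₁]; abel
    · dsimp only
      rw [map_sub, map_sub, (hainv _).1, sub_eq_iff_eq_add.1 h₂]; abel
  rwa [sub_eq_zero.1 hx']

end DirichletToNeumann

variable {H₀ H₁ HS : Type*}
  [NormedAddCommGroup H₀] [InnerProductSpace ℂ H₀] [CompleteSpace H₀]
  [NormedAddCommGroup H₁] [InnerProductSpace ℂ H₁] [CompleteSpace H₁]

theorem statement7_general
    (G Gi : H₀ →ₗ.[ℂ] H₁) (D Di : H₁ →ₗ.[ℂ] H₀)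
    (hGclosed : IsClosed (G.graph : Set (H₀ × H₁)))
    (hDclosed : IsClosed (D.graph : Set (H₁ × H₀)))
    (hGi : ∀ u w, (u, w) ∈ Gi.graph ↔ ∀ q s, (q, s) ∈ D.graph → ⟪w, q⟫ = -⟪u, s⟫)
    (hDi : ∀ q w, (q, w) ∈ Di.graph ↔ ∀ u p, (u, p) ∈ G.graph → ⟪w, u⟫ = -⟪q, p⟫)
    (hGiG : Gi.graph ≤ G.graph) (hDiD : Di.graph ≤ D.graph)
    (a : H₁ →L[ℂ] H₁) (m : H₀ →L[ℂ] H₀)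
    (ha : Coercive a) (hm : Coercive m)
    (ainv : H₁ →L[ℂ] H₁) (hainv : ∀ x, ainv (a x) = x ∧ a (ainv x) = x) :
    -- Λ is everywhere defined on BD(G)
    (∀ u₀, memBD G Gi u₀ → ∃ q₀, (u₀, q₀) ∈ dtnGraph G Gi D Di a m) ∧
    -- Λ is single-valued
    (∀ u₀ q₀ q₀', (u₀, q₀) ∈ dtnGraph G Gi D Di a m →
      (u₀, q₀') ∈ dtnGraph G Gi D Di a m → q₀ = q₀') ∧
    -- Λ is injective
    (∀ u₀ u₀' q₀, (u₀, q₀) ∈ dtnGraph G Gi D Di a m →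
      (u₀', q₀) ∈ dtnGraph G Gi D Di a m → u₀ = u₀') ∧
    -- Λ is surjective onto BD(D)
    (∀ q₀, memBD D Di q₀ → ∃ u₀, (u₀, q₀) ∈ dtnGraph G Gi D Di a m) ∧
    -- Λ is bounded (graph norms)
    (∃ C : ℝ, ∀ u₀ q₀ p s, (u₀, q₀) ∈ dtnGraph G Gi D Di a m →
      (u₀, p) ∈ G.graph → (q₀, s) ∈ D.graph →
      ‖q₀‖ ^ 2 + ‖s‖ ^ 2 ≤ C * (‖u₀‖ ^ 2 + ‖p‖ ^ 2)) ∧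
    -- Λ⁻¹ is bounded (graph norms)
    (∃ C : ℝ, ∀ u₀ q₀ p s, (u₀, q₀) ∈ dtnGraph G Gi D Di a m →
      (u₀, p) ∈ G.graph → (q₀, s) ∈ D.graph →
      ‖u₀‖ ^ 2 + ‖p‖ ^ 2 ≤ C * (‖q₀‖ ^ 2 + ‖s‖ ^ 2)) ∧
    -- Λ u₀ = π_{BD(D)} (second component of (m, -D; -G̊, a⁻¹)⁻¹ (-m u₀, G u₀))
    (∀ u₀ q₀ p, (u₀, q₀) ∈ dtnGraph G Gi D Di a m → (u₀, p) ∈ G.graph →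
      ∀ x vx y wy, (x, vx) ∈ Gi.graph → (y, wy) ∈ D.graph →
        m x - wy = -(m u₀) → ainv y - vx = p → y - q₀ ∈ Di.domain) ∧
    -- Λ⁻¹ q₀ = π_{BD(G)} (first component of (m, -D̊; -G, a⁻¹)⁻¹ (D q₀, -a⁻¹ q₀))
    (∀ u₀ q₀ s, (u₀, q₀) ∈ dtnGraph G Gi D Di a m → (q₀, s) ∈ D.graph →
      ∀ x vx y wy, (x, vx) ∈ G.graph → (y, wy) ∈ Di.graph →
        m x - wy = s → ainv y - vx = -(ainv q₀) → x - u₀ ∈ Gi.domain) := by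
  have hD : IsNegAdjoint D Gi := IsNegAdjoint.symm hGi hDclosed
  exact ⟨fun _ => exists_snd_mem_dtnGraph hGi hD hDi hGiG hDiD hm ha,
    fun _ _ _ => dtnGraph_snd_unique hD hGiG hDiD hm ha,
    fun _ _ _ => dtnGraph_fst_unique hDi hGiG hDiD hm ha,
    fun _ => exists_fst_mem_dtnGraph hGi hDi hGclosed hGiG hDiD hm ha,
    exists_dtnGraph_bound hD hGiG hDiD hm ha,
    exists_dtnGraph_inverse_bound hDi hGiG hDiD hm ha,
    fun _ _ _ h hp _ _ _ _ =>
      dtnGraph_snd_eq_projection_of_dirichletBlock hD hGiG hm ha hainv h hp,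
    fun _ _ _ h hs _ _ _ _ =>
      dtnGraph_fst_eq_projection_of_neumannBlock hDi hDiD hm ha hainv h hs⟩

/-- Theorem 2.14: the Dirichlet-to-Neumann operator `Λ : BD(G) → BD(D)`
associated with `-D a G + m` is bounded and invertible with bounded inverse,
with the representation formulas for `Λ` and `Λ⁻¹` in terms of the block
operators. -/
theorem statement7
    (G Gi : H₀ →ₗ.[ℂ] H₁) (D Di : H₁ →ₗ.[ℂ] H₀)
    (hGdense : Dense (G.domain : Set H₀)) (hDdense : Dense (D.domain : Set H₁))
    (hGclosed : IsClosed (G.graph : Set (H₀ × H₁)))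
    (hDclosed : IsClosed (D.graph : Set (H₁ × H₀)))
    (hGi : ∀ u w, (u, w) ∈ Gi.graph ↔ ∀ q s, (q, s) ∈ D.graph → ⟪w, q⟫ = -⟪u, s⟫)
    (hDi : ∀ q w, (q, w) ∈ Di.graph ↔ ∀ u p, (u, p) ∈ G.graph → ⟪w, u⟫ = -⟪q, p⟫)
    (hGiG : Gi.graph ≤ G.graph) (hDiD : Di.graph ≤ D.graph)
    (a : H₁ →L[ℂ] H₁) (m : H₀ →L[ℂ] H₀)
    (ha : Coercive a) (hm : Coercive m)
    (ainv : H₁ →L[ℂ] H₁) (hainv : ∀ x, ainv (a x) = x ∧ a (ainv x) = x) :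
    -- Λ is everywhere defined on BD(G)
    (∀ u₀, memBD G Gi u₀ → ∃ q₀, (u₀, q₀) ∈ dtnGraph G Gi D Di a m) ∧
    -- Λ is single-valued
    (∀ u₀ q₀ q₀', (u₀, q₀) ∈ dtnGraph G Gi D Di a m →
      (u₀, q₀') ∈ dtnGraph G Gi D Di a m → q₀ = q₀') ∧
    -- Λ is injective
    (∀ u₀ u₀' q₀, (u₀, q₀) ∈ dtnGraph G Gi D Di a m →
      (u₀', q₀) ∈ dtnGraph G Gi D Di a m → u₀ = u₀') ∧
    -- Λ is surjective onto BD(D)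
    (∀ q₀, memBD D Di q₀ → ∃ u₀, (u₀, q₀) ∈ dtnGraph G Gi D Di a m) ∧
    -- Λ is bounded (graph norms)
    (∃ C : ℝ, ∀ u₀ q₀ p s, (u₀, q₀) ∈ dtnGraph G Gi D Di a m →
      (u₀, p) ∈ G.graph → (q₀, s) ∈ D.graph →
      ‖q₀‖ ^ 2 + ‖s‖ ^ 2 ≤ C * (‖u₀‖ ^ 2 + ‖p‖ ^ 2)) ∧
    -- Λ⁻¹ is bounded (graph norms)
    (∃ C : ℝ, ∀ u₀ q₀ p s, (u₀, q₀) ∈ dtnGraph G Gi D Di a m →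
      (u₀, p) ∈ G.graph → (q₀, s) ∈ D.graph →
      ‖u₀‖ ^ 2 + ‖p‖ ^ 2 ≤ C * (‖q₀‖ ^ 2 + ‖s‖ ^ 2)) ∧
    -- Λ u₀ = π_{BD(D)} (second component of (m, -D; -G̊, a⁻¹)⁻¹ (-m u₀, G u₀))
    (∀ u₀ q₀ p, (u₀, q₀) ∈ dtnGraph G Gi D Di a m → (u₀, p) ∈ G.graph →
      ∀ x vx y wy, (x, vx) ∈ Gi.graph → (y, wy) ∈ D.graph →
        m x - wy = -(m u₀) → ainv y - vx = p → y - q₀ ∈ Di.domain) ∧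
    -- Λ⁻¹ q₀ = π_{BD(G)} (first component of (m, -D̊; -G, a⁻¹)⁻¹ (D q₀, -a⁻¹ q₀))
    (∀ u₀ q₀ s, (u₀, q₀) ∈ dtnGraph G Gi D Di a m → (q₀, s) ∈ D.graph →
      ∀ x vx y wy, (x, vx) ∈ G.graph → (y, wy) ∈ Di.graph →
        m x - wy = s → ainv y - vx = -(ainv q₀) → x - u₀ ∈ Gi.domain) :=
  statement7_general G Gi D Di hGclosed hDclosed hGi hDi hGiG hDiD a m ha hm ainv hainv

end DtNPaper
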